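/- For every cyclic flat Z of M there exists a cyclic flat Z' of M⁺ with Z' − e = Z; indeed Z' = cl_{M⁺}(Z) works. -/

import Mathlib

/-!
Closure in `M \ e` is closure in `M` with `e` removed, so a flat `Z` of `M \ e` satisfies
`cl(Z) - e = Z`. Closing a cyclic set keeps it cyclic: an element `x ∈ cl(Z) - Z` lies in a
circuit inside `Z ∪ {x} ⊆ cl(Z)`.
-/

open Set Matroid
open scoped Classical

namespace Paper

variable {α : Type*}

/-- A circuit of a matroid: a minimal dependent set. -/
def Circuit (M : Matroid α) (C : Set α) : Prop :=
  M.Dep C ∧ ∀ D ⊂ C, M.Indep D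

/-- A coloop: an element of the ground set lying in no circuit. -/
def Coloop (M : Matroid α) (x : α) : Prop :=
  x ∈ M.E ∧ ∀ C, Circuit M C → x ∉ C

/-- The set of coloops of a matroid. -/
def coloops (M : Matroid α) : Set α := {x | Coloop M x}

/-- A cyclic set: a subset of the ground set each of whose elements lies in a
circuit contained in the set (equivalently, the restriction has no coloops). -/
def Cyclic (M : Matroid α) (X : Set α) : Prop :=
  X ⊆ M.E ∧ ∀ x ∈ X, ∃ C, Circuit M C ∧ C ⊆ X ∧ x ∈ C

/-- A cyclic flat: a cyclic set that is also a flat. -/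
def CyclicFlat (M : Matroid α) (X : Set α) : Prop :=
  Cyclic M X ∧ M.IsFlat X

/-- The rank of a set: the largest cardinality of an independent subset. -/
noncomputable def rk (M : Matroid α) (X : Set α) : ℕ :=
  sSup (Set.ncard '' {I | M.Indep I ∧ I ⊆ X})

/-- The nullity of a set: `n(X) = |X| − r(X)`. -/
noncomputable def nullity (M : Matroid α) (X : Set α) : ℤ :=
  (X.ncard : ℤ) - rk M X

/-- Deletion of a single element: `M \ e`. -/
noncomputable def deleteElem (M : Matroid α) (e : α) : Matroid α :=
  M ↾ (M.E \ {e})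

section

variable {M : Matroid α} {C D X : Set α}

lemma circuit_iff_isCircuit : Circuit M C ↔ M.IsCircuit C :=
  isCircuit_iff_forall_ssubset.symm

lemma Cyclic.of_delete (h : Cyclic (M ＼ D) X) : Cyclic M X := by
  refine ⟨h.1.trans sdiff_subset, fun x hx ↦ ?_⟩
  obtain ⟨C, hC, hCX, hxC⟩ := h.2 x hx
  exact ⟨C, circuit_iff_isCircuit.2 (circuit_iff_isCircuit.1 hC).of_delete, hCX, hxC⟩

lemma Cyclic.closure (h : Cyclic M X) : Cyclic M (M.closure X) := by
  refine ⟨M.closure_subset_ground X, fun x hx ↦ ?_⟩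
  by_cases hxX : x ∈ X
  · obtain ⟨C, hC, hCX, hxC⟩ := h.2 x hxX
    exact ⟨C, hC, hCX.trans (M.subset_closure X h.1), hxC⟩
  obtain ⟨C, hCX, hC, hxC⟩ := exists_isCircuit_of_mem_closure hx hxX
  exact ⟨C, circuit_iff_isCircuit.2 hC,
    hCX.trans (insert_subset hx (M.subset_closure X h.1)), hxC⟩

lemma closure_diff_eq_of_isFlat_delete (hX : (M ＼ D).IsFlat X) : M.closure X \ D = X := by
  have hXD : Disjoint X D := (subset_sdiff.1 hX.subset_ground).2
  rw [← delete_closure_eq_of_disjoint M hXD, hX.closure]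

end

theorem statement_9_general (M : Matroid α) (e : α)
    (Z : Set α) (hZ : CyclicFlat (deleteElem M e) Z) :
    (∃ Z', CyclicFlat M Z' ∧ Z' \ {e} = Z) ∧
    CyclicFlat M (M.closure Z) ∧ M.closure Z \ {e} = Z := by
  have hcl : CyclicFlat M (M.closure Z) :=
    ⟨(Cyclic.of_delete (D := {e}) hZ.1).closure, M.isFlat_closure Z⟩
  have hdiff : M.closure Z \ {e} = Z := closure_diff_eq_of_isFlat_delete (D := {e}) hZ.2
  exact ⟨⟨_, hcl, hdiff⟩, hcl, hdiff⟩

theorem statement_9 (M : Matroid α) (hfin : M.E.Finite) (e : α) (he : e ∈ M.E)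
    (Z : Set α) (hZ : CyclicFlat (deleteElem M e) Z) :
    (∃ Z', CyclicFlat M Z' ∧ Z' \ {e} = Z) ∧
    CyclicFlat M (M.closure Z) ∧ M.closure Z \ {e} = Z :=
  statement_9_general M e Z hZ

end Paper
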